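/- (Theorem 1, quantitative form.) Let d be a natural number, μ₁ μ₂ : Fin d → ℝ, σ > 0, and let T_i, T_j be finite subsets of Fin d. For a finite subset T of Fin d and x : Fin d → ℝ define the score s_T(x) = ∑_{u ∈ T} [(μ₁(u) − μ₂(u))·x(u)/σ² + (μ₂(u)² − μ₁(u)²)/(2σ²)] and the posterior Q_T(x) = 1/(1 + exp(−s_T(x))). Set w(u) = (μ₁(u) − μ₂(u))/σ² and β(u) = (μ₂(u)² − μ₁(u)²)/(2σ²). Then for all x, y : Fin d → ℝ, writing S = ∑_{u ∈ T_i ∩ T_j} x(u)·y(u), P_x = ∑_{u ∈ T_i ∩ T_j} x(u)², P_y = ∑_{u ∈ T_i ∩ T_j} y(u)², W = √(∑_{u ∈ T_i ∩ T_j} w(u)²), C_i = |∑_{u ∈ T_i \ T_j} (w(u)·x(u) + β(u))|, and C_j = |∑_{u ∈ T_j \ T_i} (w(u)·y(u) + β(u))|, it holds that |Q_{T_i}(x) − Q_{T_j}(y)| ≤ (1/4)·(W·√(P_x + P_y − 2S) + C_i + C_j). Moreover, for fixed W ≥ 0, P_x, P_y, C_i, C_j, the right-hand side, viewed as a function of S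 on the set {S : 2S ≤ P_x + P_y}, is antitone (monotonically decreasing) in S; that is, if two nodes share a larger inner product ∑_{u ∈ T_i ∩ T_j} x(u)·y(u) over their common cluster-relevant features, the upper bound on the difference of their posterior class probabilities decreases. -/

import Mathlib

open Real Finset

lemma logistic_lipschitz (a b : ℝ) :
    |1 / (1 + Real.exp (-a)) - 1 / (1 + Real.exp (-b))| ≤ |a - b| / 4 := by
  have hpos : ∀ t : ℝ, (0:ℝ) < 1 + Real.exp (-t) := fun t => by positivity
  have hderiv : ∀ t : ℝ, HasDerivAt (fun s : ℝ => (1 + Real.exp (-s))⁻¹)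
      (Real.exp (-t) / (1 + Real.exp (-t)) ^ 2) t := by
    intro t
    have h1 : HasDerivAt (fun s : ℝ => 1 + Real.exp (-s)) (-Real.exp (-t)) t := by
      have := (Real.hasDerivAt_exp (-t)).comp t ((hasDerivAt_id t).neg)
      simpa using (this.const_add 1)
    have := h1.inv (ne_of_gt (hpos t))
    simpa [neg_div, pow_two, Pi.inv_def] using this
  have hlip : LipschitzWith (1/4 : NNReal) (fun s : ℝ => (1 + Real.exp (-s))⁻¹) := by
    apply lipschitzWith_of_nnnorm_deriv_le (fun t => (hderiv t).differentiableAt)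
    intro t
    rw [(hderiv t).deriv, ← NNReal.coe_le_coe, coe_nnnorm, Real.norm_eq_abs,
      abs_of_nonneg (by positivity)]
    push_cast
    rw [div_le_iff₀ (by positivity)]
    nlinarith [Real.exp_pos (-t), sq_nonneg (1 - Real.exp (-t))]
  have := hlip.dist_le_mul a b
  simp only [Real.dist_eq, one_div] at this ⊢
  push_cast at this
  linarith [this]

lemma abs_sum_mul_le {ι : Type*} (s : Finset ι) (f g : ι → ℝ) :
    |∑ i ∈ s, f i * g i| ≤ Real.sqrt (∑ i ∈ s, f i ^ 2) * Real.sqrt (∑ i ∈ s, g i ^ 2) := by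
  rw [← Real.sqrt_mul (by positivity), ← Real.sqrt_sq_eq_abs]
  exact Real.sqrt_le_sqrt (Finset.sum_mul_sq_le_sq_mul_sq s f g)

/-- Theorem 1 (quantitative form). The difference of the posterior class
probabilities of two nodes, each using its own cluster-relevant feature set,
is bounded by `(1/4) * (W * √(Pₓ + P_y - 2S) + Cᵢ + C_j)`; moreover this bound,
as a function of the inner product `S` over the common features, is antitone. -/
theorem posterior_diff_bound_and_antitone_in_inner_product
    (d : ℕ) (μ₁ μ₂ : Fin d → ℝ) (σ : ℝ) (hσ : 0 < σ)
    (Ti Tj : Finset (Fin d)) (w β : Fin d → ℝ)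
    (hw : ∀ u, w u = (μ₁ u - μ₂ u) / σ ^ 2)
    (hβ : ∀ u, β u = (μ₂ u ^ 2 - μ₁ u ^ 2) / (2 * σ ^ 2))
    (x y : Fin d → ℝ) :
    (|1 / (1 + Real.exp (-(∑ u ∈ Ti, ((μ₁ u - μ₂ u) * x u / σ ^ 2 +
          (μ₂ u ^ 2 - μ₁ u ^ 2) / (2 * σ ^ 2))))) -
        1 / (1 + Real.exp (-(∑ u ∈ Tj, ((μ₁ u - μ₂ u) * y u / σ ^ 2 +
          (μ₂ u ^ 2 - μ₁ u ^ 2) / (2 * σ ^ 2)))))| ≤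
      (1 / 4) * (Real.sqrt (∑ u ∈ Ti ∩ Tj, w u ^ 2) *
          Real.sqrt ((∑ u ∈ Ti ∩ Tj, x u ^ 2) + (∑ u ∈ Ti ∩ Tj, y u ^ 2) -
            2 * ∑ u ∈ Ti ∩ Tj, x u * y u) +
        |∑ u ∈ Ti \ Tj, (w u * x u + β u)| +
        |∑ u ∈ Tj \ Ti, (w u * y u + β u)|)) ∧
    (∀ (W Px Py Ci Cj : ℝ), 0 ≤ W →
      AntitoneOn (fun S : ℝ => (1 / 4) * (W * Real.sqrt (Px + Py - 2 * S) + Ci + Cj))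
        {S : ℝ | 2 * S ≤ Px + Py}) := by
  constructor
  · -- rewrite the score terms using w and β
    have hterm : ∀ (z : Fin d → ℝ) (u : Fin d),
        (μ₁ u - μ₂ u) * z u / σ ^ 2 + (μ₂ u ^ 2 - μ₁ u ^ 2) / (2 * σ ^ 2)
          = w u * z u + β u := by
      intro z u; rw [hw, hβ]; ring
    have hsx : (∑ u ∈ Ti, ((μ₁ u - μ₂ u) * x u / σ ^ 2 +
          (μ₂ u ^ 2 - μ₁ u ^ 2) / (2 * σ ^ 2))) = ∑ u ∈ Ti, (w u * x u + β u) :=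
      Finset.sum_congr rfl fun u _ => hterm x u
    have hsy : (∑ u ∈ Tj, ((μ₁ u - μ₂ u) * y u / σ ^ 2 +
          (μ₂ u ^ 2 - μ₁ u ^ 2) / (2 * σ ^ 2))) = ∑ u ∈ Tj, (w u * y u + β u) :=
      Finset.sum_congr rfl fun u _ => hterm y u
    rw [hsx, hsy]
    -- split the sums over the intersection and the differences
    have hx : (∑ u ∈ Ti, (w u * x u + β u))
        = (∑ u ∈ Ti ∩ Tj, (w u * x u + β u)) + ∑ u ∈ Ti \ Tj, (w u * x u + β u) :=
      (Finset.sum_inter_add_sum_sdiff Ti Tj _).symm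
    have hy : (∑ u ∈ Tj, (w u * y u + β u))
        = (∑ u ∈ Ti ∩ Tj, (w u * y u + β u)) + ∑ u ∈ Tj \ Ti, (w u * y u + β u) := by
      rw [Finset.inter_comm]
      exact (Finset.sum_inter_add_sum_sdiff Tj Ti _).symm
    have key := logistic_lipschitz (∑ u ∈ Ti, (w u * x u + β u))
      (∑ u ∈ Tj, (w u * y u + β u))
    refine key.trans ?_
    have hinter : (∑ u ∈ Ti ∩ Tj, (w u * x u + β u)) - ∑ u ∈ Ti ∩ Tj, (w u * y u + β u)
        = ∑ u ∈ Ti ∩ Tj, w u * (x u - y u) := by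
      rw [← Finset.sum_sub_distrib]
      exact Finset.sum_congr rfl fun u _ => by ring
    have hdiff : (∑ u ∈ Ti, (w u * x u + β u)) - ∑ u ∈ Tj, (w u * y u + β u)
        = (∑ u ∈ Ti ∩ Tj, w u * (x u - y u)) + (∑ u ∈ Ti \ Tj, (w u * x u + β u))
          + (-(∑ u ∈ Tj \ Ti, (w u * y u + β u))) := by
      rw [hx, hy, ← hinter]; ring
    have habs : |(∑ u ∈ Ti, (w u * x u + β u)) - ∑ u ∈ Tj, (w u * y u + β u)|
        ≤ |∑ u ∈ Ti ∩ Tj, w u * (x u - y u)| + |∑ u ∈ Ti \ Tj, (w u * x u + β u)|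
          + |∑ u ∈ Tj \ Ti, (w u * y u + β u)| := by
      rw [hdiff]
      refine (abs_add_three _ _ _).trans ?_
      rw [abs_neg]
    have hcs := abs_sum_mul_le (Ti ∩ Tj) w (fun u => x u - y u)
    have hsq : (∑ u ∈ Ti ∩ Tj, (x u - y u) ^ 2)
        = (∑ u ∈ Ti ∩ Tj, x u ^ 2) + (∑ u ∈ Ti ∩ Tj, y u ^ 2)
          - 2 * ∑ u ∈ Ti ∩ Tj, x u * y u := by
      have he : ∀ u ∈ Ti ∩ Tj, (x u - y u) ^ 2 = x u ^ 2 + y u ^ 2 - 2 * (x u * y u) :=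
        fun u _ => by ring
      rw [Finset.sum_congr rfl he, Finset.sum_sub_distrib, Finset.sum_add_distrib,
        ← Finset.mul_sum]
    rw [hsq] at hcs
    linarith [hcs, habs]
  · intro W Px Py Ci Cj hW S1 hS1 S2 hS2 h12
    simp only [Set.mem_setOf_eq] at hS1 hS2
    dsimp only
    have : Real.sqrt (Px + Py - 2 * S2) ≤ Real.sqrt (Px + Py - 2 * S1) :=
      Real.sqrt_le_sqrt (by linarith)
    nlinarith [Real.sqrt_nonneg (Px + Py - 2 * S2)]
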